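/- Equality case: with Θ = V_F V_G^H and Q = U_G diag(q_1,…,q_{N_t}) U_G^H where q_1 ≥ … ≥ q_{N_t} ≥ 0, the matrix H Q H^H = U_F D_F D_G^H diag(q_1,…,q_{N_t}) D_G D_F^H U_F^H has i-th largest eigenvalue q_i σ_i(F)² σ_i(G^H)² for i = 1,…,K, so det(I + (1/N₀) H Q H^H) = ∏_{i=1}^K (1 + q_i σ_i(F)² σ_i(G^H)²/N₀). -/

import Mathlib

open Matrix

/-- The `i`-th largest singular value of a complex matrix `A`: the square root of the
`i`-th largest eigenvalue of `Aᴴ A` (eigenvalues sorted in decreasing order). -/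
noncomputable def sval {n m : ℕ} (A : Matrix (Fin n) (Fin m) ℂ) (i : Fin m) : ℝ :=
  Real.sqrt ((Matrix.isHermitian_conjTranspose_mul_self A).eigenvalues
    (Tuple.sort (Matrix.isHermitian_conjTranspose_mul_self A).eigenvalues i.rev))

/-!
With `Θ = V_F V_Gᴴ` the inner unitary factors of `H = F Θ Gᴴ` cancel, and
`H Q Hᴴ = U_F B U_Fᴴ` with `B = D_F D_Gᴴ diag(q) D_G D_Fᴴ` diagonal, its entries
`β_t = q_t dF_t² dG_t²` decreasing, nonnegative and zero for `t ≥ K`.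
A unitary conjugate of a real diagonal matrix has the same characteristic polynomial, hence the
diagonal as its multiset of eigenvalues; sorting is determined by the multiset, so the singular
values can be read off any singular value decomposition. This gives `σ_t(F) = dF_t`,
`σ_t(Gᴴ) = dG_t` and `σ_t(H Q Hᴴ) = β_t`, and `det(I + H Q Hᴴ / N₀) = ∏_t (1 + β_t / N₀)`.
-/

theorem Tuple.comp_sort_eq_of_map_eq {α : Type*} [LinearOrder α] {n : ℕ} {f g : Fin n → α}
    (hg : Monotone g) (h : Finset.univ.val.map f = Finset.univ.val.map g) :
    f ∘ Tuple.sort f = g := by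
  have hmap : Finset.univ.val.map (f ∘ Tuple.sort f) = Finset.univ.val.map g := by
    rw [← Multiset.map_map, Multiset.map_univ_val_equiv, h]
  have hperm : (List.ofFn (f ∘ Tuple.sort f)).Perm (List.ofFn g) := by
    rw [← Multiset.coe_eq_coe, ← Fin.univ_val_map, ← Fin.univ_val_map]
    exact hmap
  exact List.ofFn_injective <|
    hperm.eq_of_sortedLE (Tuple.monotone_sort f).sortedLE_ofFn hg.sortedLE_ofFn

theorem Antitone.indicator_Iio {α β : Type*} [LinearOrder α] [Preorder β] [Zero β] {f : α → β}
    (hf : Antitone f) (hf0 : 0 ≤ f) (n : α) : Antitone ((Set.Iio n).indicator f) := by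
  intro a b hab
  by_cases hb : b < n
  · rw [Set.indicator_of_mem (Set.mem_Iio.2 hb),
      Set.indicator_of_mem (Set.mem_Iio.2 (hab.trans_lt hb))]
    exact hf hab
  · rw [Set.indicator_of_notMem (fun h => hb (Set.mem_Iio.1 h))]
    exact Set.indicator_nonneg (fun t _ => hf0 t) a

theorem antitone_dite_lt {α : Type*} [Preorder α] [Zero α] {n : ℕ} {q : Fin n → α}
    (hq : Antitone q) (hq0 : ∀ i, 0 ≤ q i) :
    Antitone fun t : ℕ => if h : t < n then q ⟨t, h⟩ else 0 := by
  intro a b hab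
  by_cases hb : b < n
  · simp only [hb, hab.trans_lt hb, dif_pos]
    exact hq hab
  · simp only [hb, dif_neg, not_false_eq_true]
    split_ifs
    exacts [hq0 _, le_rfl]

theorem Fin.prod_univ_eq_prod_univ_of_le {M : Type*} [CommMonoid M] {f : ℕ → M} {k n : ℕ}
    (hkn : k ≤ n) (hf : ∀ t, k ≤ t → t < n → f t = 1) :
    ∏ i : Fin n, f i = ∏ i : Fin k, f i := by
  rw [Fin.prod_univ_eq_prod_range, Fin.prod_univ_eq_prod_range]
  refine (Finset.prod_subset (Finset.range_subset_range.2 hkn) fun t ht hkt => ?_).symm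
  exact hf t (by simpa using hkt) (by simpa using ht)

namespace Matrix

theorem mul_mul_cancel_of_mul_eq_one {n m α : Type*} [Fintype n] [DecidableEq n]
    [Semiring α] {A B : Matrix n n α} (h : A * B = 1) (X : Matrix n m α) : A * (B * X) = X := by
  rw [← Matrix.mul_assoc, h, Matrix.one_mul]

section Unitary

variable {n R : Type*} [Fintype n] [DecidableEq n]

theorem IsHermitian.map_eigenvalues_eq_of_eq_conj_diagonal {𝕜 : Type*} [RCLike 𝕜]
    {A U : Matrix n n 𝕜} (hA : A.IsHermitian) (hU : U ∈ unitaryGroup n 𝕜) {e : n → ℝ}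
    (h : A = U * diagonal (fun i => (e i : 𝕜)) * Uᴴ) :
    Finset.univ.val.map hA.eigenvalues = Finset.univ.val.map e := by
  have hchar : A.charpoly = ∏ i, (Polynomial.X - Polynomial.C (e i : 𝕜)) := by
    rw [h, charpoly_mul_comm, ← Matrix.mul_assoc, ← star_eq_conjTranspose,
      mem_unitaryGroup_iff'.mp hU, Matrix.one_mul, charpoly_diagonal]
  have hroots := hA.roots_charpoly_eq_eigenvalues
  rw [hchar, Polynomial.roots_prod _ _
    (by simp [Finset.prod_ne_zero_iff, Polynomial.X_sub_C_ne_zero])] at hroots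
  apply Multiset.map_injective (RCLike.ofReal_injective (K := 𝕜))
  simpa [Multiset.map_map] using hroots.symm

theorem det_one_add_smul_conj_diagonal [CommRing R] [StarRing R] {U : Matrix n n R}
    (hU : U ∈ unitaryGroup n R) (c : R) (v : n → R) :
    (1 + c • (U * diagonal v * Uᴴ)).det = ∏ i, (1 + c * v i) := by
  have hUU : U * Uᴴ = 1 := mem_unitaryGroup_iff.mp hU
  have hUU' : Uᴴ * U = 1 := mem_unitaryGroup_iff'.mp hU
  have hconj : 1 + c • (U * diagonal v * Uᴴ) = U * diagonal (fun i => 1 + c * v i) * Uᴴ := by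
    have hdiag : diagonal (fun i => 1 + c * v i) = 1 + c • diagonal v := by
      ext i j
      by_cases hij : i = j <;> simp [hij]
    rw [hdiag, Matrix.mul_add, Matrix.add_mul, Matrix.mul_one, hUU,
      Matrix.mul_smul, Matrix.smul_mul]
  rw [hconj, det_mul, det_mul, mul_comm, ← mul_assoc, ← det_mul, hUU',
    det_one, one_mul, det_diagonal]

theorem norm_det_one_add_smul_conj_diagonal {U : Matrix n n ℂ} (hU : U ∈ unitaryGroup n ℂ)
    {c : ℝ} (hc : 0 ≤ c) {v : n → ℝ} (hv : 0 ≤ v) :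
    ‖(1 + (c : ℂ) • (U * diagonal (fun i => (v i : ℂ)) * Uᴴ)).det‖ = ∏ i, (1 + c * v i) := by
  have hpos : 0 ≤ ∏ i, (1 + c * v i) :=
    Finset.prod_nonneg fun i _ => by have : 0 ≤ v i := hv i; positivity
  rw [det_one_add_smul_conj_diagonal hU, ← Real.norm_of_nonneg hpos, ← Complex.norm_real]
  push_cast
  rfl

end Unitary

def rectDiagonal {α : Type*} [Zero α] {m n : ℕ} (d : ℕ → α) : Matrix (Fin m) (Fin n) α :=
  of fun i j => if (i : ℕ) = j then d i else 0

section RectDiagonal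

variable {α : Type*} {l m n : ℕ}

@[simp]
theorem rectDiagonal_apply [Zero α] (d : ℕ → α) (i : Fin m) (j : Fin n) :
    (rectDiagonal d : Matrix (Fin m) (Fin n) α) i j = if (i : ℕ) = j then d i else 0 :=
  rfl

theorem rectDiagonal_mul_rectDiagonal [NonUnitalNonAssocSemiring α] (f g : ℕ → α) :
    (rectDiagonal f : Matrix (Fin l) (Fin m) α) * (rectDiagonal g : Matrix (Fin m) (Fin n) α) =
      rectDiagonal ((Set.Iio m).indicator (f * g)) := by
  ext i k
  rw [mul_apply, rectDiagonal_apply]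
  by_cases hi : (i : ℕ) < m
  · rw [Finset.sum_eq_single ⟨i, hi⟩ (fun j _ hj => by simp [Ne.symm (Fin.val_ne_of_ne hj)])
      (by simp)]
    by_cases hik : (i : ℕ) = k
    · simp [← hik, hi]
    · simp [hik]
  · have : ∀ j : Fin m, (i : ℕ) ≠ j := fun j h => hi (h ▸ j.isLt)
    simp [this, hi]

theorem conjTranspose_rectDiagonal [AddMonoid α] [StarAddMonoid α] (d : ℕ → α) :
    (rectDiagonal d : Matrix (Fin m) (Fin n) α)ᴴ = rectDiagonal (fun t => star (d t)) := by
  ext i j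
  by_cases h : (i : ℕ) = j
  · simp [h]
  · simp [h, Ne.symm h]

theorem rectDiagonal_eq_diagonal [Zero α] {d : ℕ → α} {v : Fin n → α}
    (h : ∀ i : Fin n, d i = v i) : rectDiagonal d = diagonal v := by
  ext i j
  simp [diagonal_apply, Fin.ext_iff, h]

end RectDiagonal

end Matrix

theorem sval_eq_sqrt_of_conjTranspose_mul_self_eq {n m : ℕ} {A : Matrix (Fin n) (Fin m) ℂ}
    {V : Matrix (Fin m) (Fin m) ℂ} (hV : V ∈ unitaryGroup (Fin m) ℂ) {e : Fin m → ℝ}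
    (he : Antitone e) (h : Aᴴ * A = V * diagonal (fun j => (e j : ℂ)) * Vᴴ) (j : Fin m) :
    sval A j = √(e j) := by
  have hA := isHermitian_conjTranspose_mul_self A
  have hsort : hA.eigenvalues ∘ Tuple.sort hA.eigenvalues = e ∘ Fin.rev :=
    Tuple.comp_sort_eq_of_map_eq (he.comp Fin.rev_anti) ?_
  · rw [sval, ← Function.comp_apply (f := hA.eigenvalues), hsort]
    simp
  · rw [hA.map_eigenvalues_eq_of_eq_conj_diagonal hV h, ← Multiset.map_map]
    exact congrArg _ (Multiset.map_univ_val_equiv Fin.revPerm).symm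

theorem sval_eq_indicator_of_eq_mul_rectDiagonal_mul {n m : ℕ} {A : Matrix (Fin n) (Fin m) ℂ}
    {U : Matrix (Fin n) (Fin n) ℂ} {V : Matrix (Fin m) (Fin m) ℂ}
    (hU : U ∈ unitaryGroup (Fin n) ℂ) (hV : V ∈ unitaryGroup (Fin m) ℂ) {d : ℕ → ℝ}
    (hd : Antitone d) (hd0 : 0 ≤ d)
    (h : A = U * (rectDiagonal (fun t => (d t : ℂ)) : Matrix (Fin n) (Fin m) ℂ) * Vᴴ)
    (j : Fin m) : sval A j = (Set.Iio n).indicator d j := by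
  set e : Fin m → ℝ := fun j => (Set.Iio n).indicator (d ^ 2) j
  have hgram : Aᴴ * A = V * diagonal (fun j => (e j : ℂ)) * Vᴴ := by
    have hUU : Uᴴ * U = 1 := mem_unitaryGroup_iff'.mp hU
    rw [h]
    simp only [conjTranspose_mul, conjTranspose_conjTranspose, conjTranspose_rectDiagonal,
      Matrix.mul_assoc, mul_mul_cancel_of_mul_eq_one hUU]
    rw [← Matrix.mul_assoc (rectDiagonal _), rectDiagonal_mul_rectDiagonal,
      rectDiagonal_eq_diagonal]
    intro i
    by_cases hi : (i : ℕ) < n <;> simp [e, hi, sq]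
  have hd2 : Antitone (d ^ 2) := fun a b hab => pow_le_pow_left₀ (hd0 b) (hd hab) 2
  have he : Antitone e := fun a b hab => hd2.indicator_Iio (fun t => sq_nonneg (d t)) n hab
  rw [sval_eq_sqrt_of_conjTranspose_mul_self_eq hV he hgram]
  by_cases hj : (j : ℕ) < n <;> simp [e, hj, Real.sqrt_sq (hd0 _)]

/-- The `β_t` above: the `t`-th largest eigenvalue of `H Q Hᴴ`. -/
noncomputable def streamGain {Nt : ℕ} (M : ℕ) (q : Fin Nt → ℝ) (dF dG : ℕ → ℝ) : ℕ → ℝ :=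
  (Set.Iio M).indicator fun t => (if h : t < Nt then q ⟨t, h⟩ else 0) * dF t ^ 2 * dG t ^ 2

section StreamGain

variable {Nt : ℕ} (M : ℕ) (q : Fin Nt → ℝ) (dF dG : ℕ → ℝ)

theorem streamGain_of_lt {t : ℕ} (htM : t < M) (htNt : t < Nt) :
    streamGain M q dF dG t = q ⟨t, htNt⟩ * dF t ^ 2 * dG t ^ 2 := by
  simp [streamGain, htM, htNt]

theorem streamGain_eq_zero {t : ℕ} (ht : M ≤ t ∨ Nt ≤ t) : streamGain M q dF dG t = 0 := by
  rcases ht with htM | htNt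
  · simp [streamGain, htM]
  · simp [streamGain, htNt]

variable {M q dF dG}

theorem streamGain_nonneg (hq0 : ∀ i, 0 ≤ q i) : 0 ≤ streamGain M q dF dG := by
  refine Set.indicator_nonneg fun t _ => mul_nonneg (mul_nonneg ?_ (sq_nonneg _)) (sq_nonneg _)
  split_ifs
  exacts [hq0 _, le_rfl]

theorem streamGain_antitone (hq : Antitone q) (hq0 : ∀ i, 0 ≤ q i) (hdF : Antitone dF)
    (hdF0 : ∀ t, 0 ≤ dF t) (hdG : Antitone dG) (hdG0 : ∀ t, 0 ≤ dG t) :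
    Antitone (streamGain M q dF dG) := by
  have hqe0 (t : ℕ) : 0 ≤ if h : t < Nt then q ⟨t, h⟩ else 0 := by
    split_ifs
    exacts [hq0 _, le_rfl]
  refine Antitone.indicator_Iio (fun a b hab => ?_) (fun t => ?_) M
  · have := antitone_dite_lt hq hq0 hab
    have := hqe0 a
    have := hqe0 b
    have := hdF0 b
    have := hdG0 b
    gcongr
    exacts [hdF hab, hdG hab]
  · have := hqe0 t
    positivity

theorem rectDiagonal_mul_conjTranspose_mul_diagonal_mul {Nr : ℕ} :
    (rectDiagonal (fun t => (dF t : ℂ)) : Matrix (Fin Nr) (Fin M) ℂ) *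
        (rectDiagonal (fun t => (dG t : ℂ)) : Matrix (Fin Nt) (Fin M) ℂ)ᴴ *
        (diagonal (fun i => (q i : ℂ)) : Matrix (Fin Nt) (Fin Nt) ℂ) *
        (rectDiagonal (fun t => (dG t : ℂ)) : Matrix (Fin Nt) (Fin M) ℂ) *
        (rectDiagonal (fun t => (dF t : ℂ)) : Matrix (Fin Nr) (Fin M) ℂ)ᴴ =
      (rectDiagonal (fun t => (streamGain M q dF dG t : ℂ)) : Matrix (Fin Nr) (Fin Nr) ℂ) := by
  have hq : diagonal (fun i => (q i : ℂ)) =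
      rectDiagonal (fun t => ((if h : t < Nt then q ⟨t, h⟩ else 0 : ℝ) : ℂ)) :=
    (rectDiagonal_eq_diagonal fun i => by simp).symm
  simp only [hq, conjTranspose_rectDiagonal, rectDiagonal_mul_rectDiagonal]
  congr 1
  funext t
  by_cases hM : t < M
  · by_cases hNt : t < Nt
    · simp [streamGain, Set.indicator, hM, hNt]
      ring
    · simp [streamGain, Set.indicator, hM, hNt]
  · simp [streamGain, Set.indicator, hM]

end StreamGain

/-- Equality case of the capacity bound: with `Θ = V_F V_Gᴴ` and
`Q = U_G diag(q₁,…,q_{N_t}) U_Gᴴ` (with `q₁ ≥ … ≥ q_{N_t} ≥ 0`), the matrix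
`H Q Hᴴ = U_F D_F D_Gᴴ diag(q) D_G D_Fᴴ U_Fᴴ` has `i`-th largest eigenvalue
`q_i σ_i(F)² σ_i(Gᴴ)²`, so `det(I + (1/N₀) H Q Hᴴ) = ∏_{i=1}^K (1 + q_i σ_i(F)² σ_i(Gᴴ)²/N₀)`. -/
theorem capacity_equality_case (M Nt Nr : ℕ) (N0 : ℝ) (hN0 : 0 < N0)
    (F : Matrix (Fin Nr) (Fin M) ℂ) (G : Matrix (Fin Nt) (Fin M) ℂ)
    (UF : Matrix (Fin Nr) (Fin Nr) ℂ) (UG : Matrix (Fin Nt) (Fin Nt) ℂ)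
    (VF VG : Matrix (Fin M) (Fin M) ℂ)
    (DF : Matrix (Fin Nr) (Fin M) ℂ) (DG : Matrix (Fin Nt) (Fin M) ℂ)
    (dF dG : ℕ → ℝ)
    (hUF : UFᴴ * UF = 1)
    (hUG : UGᴴ * UG = 1)
    (hVF : VFᴴ * VF = 1)
    (hVG : VGᴴ * VG = 1)
    (hdF : Antitone dF) (hdF0 : ∀ i, 0 ≤ dF i)
    (hdG : Antitone dG) (hdG0 : ∀ i, 0 ≤ dG i)
    (hDF : ∀ i j, DF i j = if (i : ℕ) = (j : ℕ) then ((dF i : ℝ) : ℂ) else 0)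
    (hDG : ∀ i j, DG i j = if (i : ℕ) = (j : ℕ) then ((dG i : ℝ) : ℂ) else 0)
    (hFsvd : F = UF * DF * VFᴴ) (hGsvd : G = UG * DG * VGᴴ)
    (q : Fin Nt → ℝ) (hq : Antitone q) (hq0 : ∀ i, 0 ≤ q i)
    (Θ : Matrix (Fin M) (Fin M) ℂ) (hΘ : Θ = VF * VGᴴ)
    (Q : Matrix (Fin Nt) (Fin Nt) ℂ)
    (hQ : Q = UG * Matrix.diagonal (fun i => ((q i : ℝ) : ℂ)) * UGᴴ)
    (H : Matrix (Fin Nr) (Fin Nt) ℂ) (hH : H = F * Θ * Gᴴ) :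
    H * Q * Hᴴ =
      UF * (DF * DGᴴ * Matrix.diagonal (fun i => ((q i : ℝ) : ℂ)) * DG * DFᴴ) * UFᴴ ∧
    (∀ i : Fin (min (min Nt Nr) M),
      sval (H * Q * Hᴴ) ⟨i, by omega⟩ =
        q ⟨i, by omega⟩ * (sval F ⟨i, by omega⟩) ^ 2 * (sval Gᴴ ⟨i, by omega⟩) ^ 2) ∧
    ‖(1 + ((N0⁻¹ : ℝ) : ℂ) • (H * Q * Hᴴ)).det‖ =
      ∏ i : Fin (min (min Nt Nr) M),
        (1 + q ⟨i, by omega⟩ * (sval F ⟨i, by omega⟩) ^ 2 *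
          (sval Gᴴ ⟨i, by omega⟩) ^ 2 / N0) := by
  have uUF : UF ∈ unitaryGroup (Fin Nr) ℂ := mem_unitaryGroup_iff'.mpr hUF
  replace hDF : DF = rectDiagonal (fun t => (dF t : ℂ)) := Matrix.ext hDF
  replace hDG : DG = rectDiagonal (fun t => (dG t : ℂ)) := Matrix.ext hDG
  have hHQH : H * Q * Hᴴ =
      UF * (DF * DGᴴ * diagonal (fun i => ((q i : ℝ) : ℂ)) * DG * DFᴴ) * UFᴴ := by
    rw [hH, hQ, hFsvd, hGsvd, hΘ]
    simp only [conjTranspose_mul, conjTranspose_conjTranspose, Matrix.mul_assoc,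
      mul_mul_cancel_of_mul_eq_one hVF, mul_mul_cancel_of_mul_eq_one hVG,
      mul_mul_cancel_of_mul_eq_one hUG]
  have hB : H * Q * Hᴴ = UF * rectDiagonal (fun t => (streamGain M q dF dG t : ℂ)) * UFᴴ := by
    rw [hHQH, hDF, hDG, rectDiagonal_mul_conjTranspose_mul_diagonal_mul]
  have svF (j : Fin M) : sval F j = (Set.Iio Nr).indicator dF j :=
    sval_eq_indicator_of_eq_mul_rectDiagonal_mul uUF (mem_unitaryGroup_iff'.mpr hVF) hdF hdF0
      (hDF ▸ hFsvd) j
  have svG (i : Fin Nt) : sval Gᴴ i = (Set.Iio M).indicator dG i :=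
    sval_eq_indicator_of_eq_mul_rectDiagonal_mul (mem_unitaryGroup_iff'.mpr hVG)
      (mem_unitaryGroup_iff'.mpr hUG) hdG hdG0
      (by simp [hGsvd, hDG, conjTranspose_rectDiagonal, Matrix.mul_assoc]) i
  have svHQH (i : Fin Nr) : sval (H * Q * Hᴴ) i = streamGain M q dF dG i := by
    rw [sval_eq_indicator_of_eq_mul_rectDiagonal_mul uUF uUF
      (streamGain_antitone hq hq0 hdF hdF0 hdG hdG0) (streamGain_nonneg hq0) hB,
      Set.indicator_of_mem (Set.mem_Iio.2 i.isLt)]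
  have hsv (i : Fin (min (min Nt Nr) M)) : sval (H * Q * Hᴴ) ⟨i, by omega⟩ =
      q ⟨i, by omega⟩ * (sval F ⟨i, by omega⟩) ^ 2 * (sval Gᴴ ⟨i, by omega⟩) ^ 2 := by
    have hi := i.isLt
    rw [svHQH, svF, svG, Set.indicator_of_mem (Set.mem_Iio.2 (show (i : ℕ) < Nr by omega)),
      Set.indicator_of_mem (Set.mem_Iio.2 (show (i : ℕ) < M by omega)),
      streamGain_of_lt M q dF dG (t := i) (by omega) (by omega)]
  refine ⟨hHQH, hsv, ?_⟩
  rw [hB, rectDiagonal_eq_diagonal (fun _ => rfl), norm_det_one_add_smul_conj_diagonal uUF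
      (inv_nonneg.2 hN0.le) fun i => streamGain_nonneg hq0 i,
    Fin.prod_univ_eq_prod_univ_of_le (f := fun t => 1 + N0⁻¹ * streamGain M q dF dG t)
      (k := min (min Nt Nr) M) (by omega)
      fun t hKt _ => by simp [streamGain_eq_zero M q dF dG (t := t) (by omega)]]
  exact Finset.prod_congr rfl fun i _ => by rw [← hsv i, svHQH, inv_mul_eq_div]
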